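/- Let D ≥ 1 be an integer, let a ∈ ℂ^D be a fixed vector each of whose entries has modulus 1, let ρ > 0, let c ∈ ℂ with |c| = √ρ, and let z be a standard complex Gaussian vector in ℂ^D. Then for every γ with 0 < γ < ρ, Pr( ‖c·a + z‖² < (1 + γ) D ) ≤ exp( − D (ρ − γ)² / (2 + 4ρ) ), where ‖·‖ denotes the Euclidean norm on ℂ^D. -/

import Mathlib

/-!
Split into its `2D` real coordinates, `c • a + z` is a vector of independent `N(μ_p, 1/2)` variables
with `∑ μ_p² = ρ D`, so `‖c • a + z‖²` is a noncentral χ². Its Laplace transform is explicit,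
`E exp(-t (μ + g)²) = exp(-t μ² / (1 + t)) / √(1 + t)`, and the lower-tail Chernoff bound gives
`P(‖c • a + z‖² ≤ (1 + γ) D) ≤ (exp(t (1 + γ) - t ρ / (1 + t)) / (1 + t))^D`. With
`1 / (1 + t) ≥ 1 - t` and `log (1 + t) ≥ t - t² / 2` the exponent is at most
`t² (1 + 2ρ) / 2 - t (ρ - γ)`, which is `-(ρ - γ)² / (2 + 4ρ)` at its minimiser
`t = (ρ - γ) / (1 + 2ρ)`.
-/

open scoped BigOperators NNReal
open MeasureTheory ProbabilityTheory

/-- `z : Ω → ℂ^D` is a standard complex Gaussian vector (`z ~ CN(0, I_D)`):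
its `2D` real coordinates (real and imaginary parts of the entries) are
independent real Gaussians with mean `0` and variance `1/2`. -/
def IsStdComplexGaussianVec {Ω : Type*} [MeasurableSpace Ω] (P : Measure Ω)
    {D : ℕ} (z : Ω → Fin D → ℂ) : Prop :=
  (∀ p : Fin D × Bool,
      Measure.map (fun ω => if p.2 then (z ω p.1).im else (z ω p.1).re) P =
        gaussianReal 0 (1/2 : ℝ≥0)) ∧
    iIndepFun
      (fun (p : Fin D × Bool) ω => if p.2 then (z ω p.1).im else (z ω p.1).re) P

open Real

lemma sub_sq_div_two_le_log_one_add {t : ℝ} (ht : 0 ≤ t) : t - t ^ 2 / 2 ≤ log (1 + t) := by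
  refine le_trans ?_ (le_log_one_add_of_nonneg ht)
  rw [le_div_iff₀ (by positivity)]
  nlinarith [pow_nonneg ht 3]

lemma exp_mul_sub_div_one_add_div_le {t ρ : ℝ} (ht : 0 ≤ t) (hρ : 0 ≤ ρ) (γ : ℝ) :
    exp (t * (1 + γ) - t * ρ / (1 + t)) / (1 + t) ≤
      exp (t ^ 2 * (1 + 2 * ρ) / 2 - t * (ρ - γ)) := by
  have hlog := sub_sq_div_two_le_log_one_add ht
  have hdiv : t * ρ * (1 - t) ≤ t * ρ / (1 + t) := by
    rw [le_div_iff₀ (by positivity)]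
    nlinarith [mul_nonneg (mul_nonneg ht hρ) (sq_nonneg t)]
  calc exp (t * (1 + γ) - t * ρ / (1 + t)) / (1 + t)
      = exp (t * (1 + γ) - t * ρ / (1 + t) - log (1 + t)) := by
        rw [exp_sub _ (log _), exp_log (by positivity)]
    _ ≤ exp (t ^ 2 * (1 + 2 * ρ) / 2 - t * (ρ - γ)) := exp_le_exp.2 (by linarith)

lemma exists_chernoff_parameter {ρ γ : ℝ} (hρ : 0 ≤ ρ) (hγ : γ ≤ ρ) (D : ℕ) :
    ∃ t ≥ 0, exp (t * ((1 + γ) * D)) * (exp (-t * (ρ * D) / (1 + t)) / (1 + t) ^ D) ≤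
      exp (-(D : ℝ) * (ρ - γ) ^ 2 / (2 + 4 * ρ)) := by
  set t := (ρ - γ) / (1 + 2 * ρ) with ht_def
  have ht : 0 ≤ t := div_nonneg (by linarith) (by linarith)
  refine ⟨t, ht, ?_⟩
  have hmin : t ^ 2 * (1 + 2 * ρ) / 2 - t * (ρ - γ) = -(ρ - γ) ^ 2 / (2 + 4 * ρ) := by
    rw [ht_def]; field_simp; ring
  calc exp (t * ((1 + γ) * D)) * (exp (-t * (ρ * D) / (1 + t)) / (1 + t) ^ D)
      = (exp (t * (1 + γ) - t * ρ / (1 + t)) / (1 + t)) ^ D := by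
        rw [div_pow, ← exp_nat_mul, mul_div_assoc', ← exp_add]; ring_nf
    _ ≤ exp (-(ρ - γ) ^ 2 / (2 + 4 * ρ)) ^ D := by
        rw [← hmin]
        exact pow_le_pow_left₀ (by positivity) (exp_mul_sub_div_one_add_div_le ht hρ γ) D
    _ = exp (-(D : ℝ) * (ρ - γ) ^ 2 / (2 + 4 * ρ)) := by rw [← exp_nat_mul]; ring_nf

lemma integral_exp_neg_mul_sq_gaussianReal (μ : ℝ) (v : ℝ≥0) {t : ℝ}
    (ht : 0 < 1 + 2 * v * t) :
    ∫ x, exp (-t * x ^ 2) ∂gaussianReal μ v =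
      exp (-t * μ ^ 2 / (1 + 2 * v * t)) / √(1 + 2 * v * t) := by
  rcases eq_or_ne v 0 with rfl | hv
  · simp [gaussianReal_zero_var]
  have hv' : (0 : ℝ) < v := by positivity
  set s := 1 + 2 * v * t
  have hcomplete_sq : ∀ x, gaussianPDFReal μ v x • exp (-t * x ^ 2) =
      (√(2 * π * v))⁻¹ * exp (-t * μ ^ 2 / s) * exp (-(s / (2 * v)) * (x - μ / s) ^ 2) := by
    intro x
    simp only [gaussianPDFReal, smul_eq_mul, mul_assoc, ← exp_add]
    congr 2
    field_simp
    ring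
  rw [integral_gaussianReal_eq_integral_smul hv]
  simp_rw [hcomplete_sq]
  rw [integral_const_mul, integral_sub_right_eq_self (fun x => exp (-(s / (2 * v)) * x ^ 2)),
    integral_gaussian, show π / (s / (2 * v)) = 2 * π * v / s by field_simp,
    sqrt_div (by positivity)]
  field_simp

section Chernoff

variable {Ω : Type*} [MeasurableSpace Ω] {P : Measure Ω} {v : ℝ≥0} {t : ℝ}

lemma mgf_sq_neg_of_hasLaw_gaussianReal {X : Ω → ℝ} {μ : ℝ} (hX : HasLaw X (gaussianReal μ v) P)
    (ht : 0 < 1 + 2 * v * t) :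
    mgf (fun ω => X ω ^ 2) P (-t) = exp (-t * μ ^ 2 / (1 + 2 * v * t)) / √(1 + 2 * v * t) :=
  (hX.integral_comp (f := fun x => exp (-t * x ^ 2)) (by fun_prop)).trans
    (integral_exp_neg_mul_sq_gaussianReal μ v ht)

variable {ι : Type*} [Fintype ι] {X : ι → Ω → ℝ} {μ : ι → ℝ}

lemma mgf_sum_sq_neg_of_iIndepFun_gaussianReal (hind : iIndepFun X P)
    (hX : ∀ i, HasLaw (X i) (gaussianReal (μ i) v) P) (ht : 0 < 1 + 2 * v * t) :
    mgf (fun ω => ∑ i, X i ω ^ 2) P (-t) =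
      exp (-t * (∑ i, μ i ^ 2) / (1 + 2 * v * t)) / √(1 + 2 * v * t) ^ Fintype.card ι := by
  have hsq : iIndepFun (fun i ω => X i ω ^ 2) P := hind.comp (fun _ x => x ^ 2) fun _ => by fun_prop
  have hsum : (fun ω => ∑ i, X i ω ^ 2) = ∑ i, fun ω => X i ω ^ 2 := by
    ext ω; simp
  rw [hsum, hsq.mgf_sum₀ (fun i => (hX i).aemeasurable.pow_const 2)]
  simp_rw [mgf_sq_neg_of_hasLaw_gaussianReal (hX _) ht]
  rw [Finset.prod_div_distrib, ← exp_sum, Finset.prod_const, Finset.card_univ, Finset.mul_sum,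
    Finset.sum_div]

lemma measureReal_sum_sq_le_le_of_iIndepFun_gaussianReal [IsProbabilityMeasure P]
    (hind : iIndepFun X P) (hX : ∀ i, HasLaw (X i) (gaussianReal (μ i) v) P) (ht : 0 ≤ t)
    (ε : ℝ) :
    P.real {ω | ∑ i, X i ω ^ 2 ≤ ε} ≤
      exp (t * ε) *
        (exp (-t * (∑ i, μ i ^ 2) / (1 + 2 * v * t)) / √(1 + 2 * v * t) ^ Fintype.card ι) := by
  have hint : Integrable (fun ω => exp (-t * ∑ i, X i ω ^ 2)) P := by
    have hmeas i := (hX i).aemeasurable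
    refine .of_bound (by fun_prop) 1 (ae_of_all _ fun ω => ?_)
    rw [norm_of_nonneg (exp_nonneg _), exp_le_one_iff, neg_mul, neg_nonpos]
    positivity
  have := measure_le_le_exp_mul_mgf ε (neg_nonpos.2 ht) hint
  rwa [neg_neg, mgf_sum_sq_neg_of_iIndepFun_gaussianReal hind hX (by positivity)] at this

end Chernoff

section RealCoordinates

variable {ι : Type*}

def realCoord (w : ι → ℂ) (p : ι × Bool) : ℝ :=
  if p.2 then (w p.1).im else (w p.1).re

lemma realCoord_add (w w' : ι → ℂ) (p : ι × Bool) :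
    realCoord (w + w') p = realCoord w p + realCoord w' p := by
  unfold realCoord; split_ifs <;> simp

lemma sum_realCoord_sq [Fintype ι] (w : ι → ℂ) :
    ∑ p, realCoord w p ^ 2 = ∑ i, ‖w i‖ ^ 2 := by
  simp only [Fintype.sum_prod_type, Fintype.sum_bool, realCoord, Complex.sq_norm,
    Complex.normSq_apply, if_true, Bool.false_eq_true, if_false]
  exact Finset.sum_congr rfl fun i _ => by ring

end RealCoordinates

namespace IsStdComplexGaussianVec

variable {Ω : Type*} [MeasurableSpace Ω] {P : Measure Ω} {D : ℕ} {z : Ω → Fin D → ℂ}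

lemma hasLaw_realCoord_add (hz : IsStdComplexGaussianVec P z) (w : Fin D → ℂ) (p : Fin D × Bool) :
    HasLaw (fun ω => realCoord (w + z ω) p) (gaussianReal (realCoord w p) (1 / 2)) P := by
  have hmap : P.map (fun ω => realCoord (z ω) p) = gaussianReal 0 (1 / 2) := hz.1 p
  have hzp : HasLaw (fun ω => realCoord (z ω) p) (gaussianReal 0 (1 / 2)) P :=
    ⟨.of_map_ne_zero (by rw [hmap]; exact IsProbabilityMeasure.ne_zero _), hmap⟩
  simpa [realCoord_add, add_comm] using gaussianReal_const_add hzp (realCoord w p)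

lemma iIndepFun_realCoord_add (hz : IsStdComplexGaussianVec P z) (w : Fin D → ℂ) :
    iIndepFun (fun p ω => realCoord (w + z ω) p) P := by
  have hzind : iIndepFun (fun p ω => realCoord (z ω) p) P := hz.2
  simp only [realCoord_add]
  exact hzind.comp (fun p x => realCoord w p + x) fun _ => by fun_prop

lemma measureReal_sum_norm_sq_le_le [IsProbabilityMeasure P] (hz : IsStdComplexGaussianVec P z)
    (w : Fin D → ℂ) {t : ℝ} (ht : 0 ≤ t) (ε : ℝ) :
    P.real {ω | ∑ i, ‖w i + z ω i‖ ^ 2 ≤ ε} ≤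
      exp (t * ε) * (exp (-t * (∑ i, ‖w i‖ ^ 2) / (1 + t)) / (1 + t) ^ D) := by
  have h := measureReal_sum_sq_le_le_of_iIndepFun_gaussianReal (hz.iIndepFun_realCoord_add w)
    (hz.hasLaw_realCoord_add w) ht ε
  have hv : 1 + 2 * ((1 / 2 : ℝ≥0) : ℝ) * t = 1 + t := by norm_num
  have hcard : √(1 + t) ^ Fintype.card (Fin D × Bool) = (1 + t) ^ D := by
    rw [Fintype.card_prod, Fintype.card_fin, Fintype.card_bool, pow_mul', sq_sqrt (by linarith)]
  simpa only [sum_realCoord_sq, Pi.add_apply, hv, hcard] using h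

end IsStdComplexGaussianVec

theorem singleton_zeroton_misclassification_general
    {Ω : Type*} [MeasurableSpace Ω] (P : Measure Ω) [IsProbabilityMeasure P]
    (D : ℕ) (a : Fin D → ℂ) (ha : ∀ i, ‖a i‖ = 1)
    (ρ : ℝ) (hρ : 0 < ρ) (c : ℂ) (hc : ‖c‖ = Real.sqrt ρ)
    (z : Ω → Fin D → ℂ) (hz : IsStdComplexGaussianVec P z)
    (γ : ℝ) (hγ : γ < ρ) :
    P {ω | ∑ i, ‖c * a i + z ω i‖ ^ 2 < (1 + γ) * D} ≤
      ENNReal.ofReal (Real.exp (-(D : ℝ) * (ρ - γ) ^ 2 / (2 + 4 * ρ))) := by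
  obtain ⟨t, ht, hbound⟩ := exists_chernoff_parameter hρ.le hγ.le D
  have hmean : ∑ i, ‖c * a i‖ ^ 2 = ρ * D := by
    simp [hc, ha, sq_sqrt hρ.le, mul_comm]
  have hchernoff := hz.measureReal_sum_norm_sq_le_le (fun i => c * a i) ht ((1 + γ) * D)
  rw [hmean] at hchernoff
  calc P {ω | ∑ i, ‖c * a i + z ω i‖ ^ 2 < (1 + γ) * D}
      ≤ P {ω | ∑ i, ‖c * a i + z ω i‖ ^ 2 ≤ (1 + γ) * D} :=
        measure_mono <| Set.ofPred_subset_ofPred.2 fun _ => le_of_lt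
    _ = ENNReal.ofReal (P.real {ω | ∑ i, ‖c * a i + z ω i‖ ^ 2 ≤ (1 + γ) * D}) :=
        (ofReal_measureReal (measure_ne_top _ _)).symm
    _ ≤ ENNReal.ofReal (exp (-(D : ℝ) * (ρ - γ) ^ 2 / (2 + 4 * ρ))) :=
        ENNReal.ofReal_le_ofReal (hchernoff.trans hbound)

/-- (STATEMENT 16) Singleton-to-zeroton misclassification bound: for a fixed vector
`a ∈ ℂ^D` with unit-modulus entries, a coefficient `c` with `|c| = √ρ`, a standard
complex Gaussian vector `z ~ CN(0, I_D)`, and any `0 < γ < ρ`,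
`Pr(‖c·a + z‖² < (1+γ)D) ≤ exp(-D(ρ-γ)²/(2+4ρ))`. -/
theorem singleton_zeroton_misclassification
    {Ω : Type*} [MeasurableSpace Ω] (P : Measure Ω) [IsProbabilityMeasure P]
    (D : ℕ) (hD : 1 ≤ D) (a : Fin D → ℂ) (ha : ∀ i, ‖a i‖ = 1)
    (ρ : ℝ) (hρ : 0 < ρ) (c : ℂ) (hc : ‖c‖ = Real.sqrt ρ)
    (z : Ω → Fin D → ℂ) (hz : IsStdComplexGaussianVec P z)
    (γ : ℝ) (hγ0 : 0 < γ) (hγ : γ < ρ) :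
    P {ω | ∑ i, ‖c * a i + z ω i‖ ^ 2 < (1 + γ) * D} ≤
      ENNReal.ofReal (Real.exp (-(D : ℝ) * (ρ - γ) ^ 2 / (2 + 4 * ρ))) :=
  singleton_zeroton_misclassification_general P D a ha ρ hρ c hc z hz γ hγ
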